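/- arXiv:1411.6886 — 2 statements merged into one kernel-verified Lean document; each statement's English description precedes it below -/
import Mathlib

section
/- Let X = ∏_{t∈T} X_t be a product of sets with |X_t| > 1 for all t ∈ T and with T nonempty. Then there exists an S-open subset A of X with ∅ ≠ A ≠ X if and only if T is infinite. -/
open Function Filter Topology

/-- `Sigma1 x` (σ₁(x)): the set of points differing from `x` in at most one coordinate. -/
def Sigma1 {T : Type*} {X : T → Type*} (x : ∀ t, X t) : Set (∀ t, X t) :=
  {y | {t | y t ≠ x t}.Subsingleton}

/-- A set `A` is `S`-open if `σ₁(x) ⊆ A` for every `x ∈ A`. -/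
def SOpen {T : Type*} {X : T → Type*} (A : Set (∀ t, X t)) : Prop :=
  ∀ x ∈ A, Sigma1 x ⊆ A

/-!
An S-open set is closed under changing one coordinate, hence under changing finitely many;
so for finite `T` a nonempty S-open set is everything. For infinite `T`, the class
`σ(x)` of points differing from `x` in finitely many coordinates is S-open, contains `x`,
and misses any point differing from `x` everywhere.
-/

section

variable {T : Type*} {X : T → Type*}

/-- The paper's `σ(x)`. -/
def SigmaFin (x : ∀ t, X t) : Set (∀ t, X t) :=
  {y | {t | y t ≠ x t}.Finite}

lemma mem_sigma1_update [DecidableEq T] (y : ∀ t, X t) (a : T) (b : X a) :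
    y ∈ Sigma1 (update y a b) :=
  Set.subsingleton_singleton.anti fun t ht => by
    by_contra hta
    exact ht (update_of_ne hta b y).symm

lemma sigma1_subset_sigmaFin (x : ∀ t, X t) : Sigma1 x ⊆ SigmaFin x :=
  fun _ hy => Set.Subsingleton.finite hy

lemma mem_sigmaFin_self (x : ∀ t, X t) : x ∈ SigmaFin x := by
  simp [SigmaFin]

lemma mem_sigmaFin_trans {x y z : ∀ t, X t} (hzy : z ∈ SigmaFin y) (hyx : y ∈ SigmaFin x) :
    z ∈ SigmaFin x := by
  refine (hzy.union hyx).subset fun t hzx => ?_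
  by_cases h : z t = y t
  · exact Or.inr fun hyx => hzx (h.trans hyx)
  · exact Or.inl h

lemma sOpen_sigmaFin (x : ∀ t, X t) : SOpen (SigmaFin x) :=
  fun _ hy _ hz => mem_sigmaFin_trans (sigma1_subset_sigmaFin _ hz) hy

lemma sigmaFin_ne_univ [Infinite T] (hnt : ∀ t, Nontrivial (X t)) (x : ∀ t, X t) :
    SigmaFin x ≠ Set.univ := by
  choose y hy using fun t => exists_ne (x t)
  intro h
  have hy_mem : y ∈ SigmaFin x := h ▸ Set.mem_univ y
  have hdiff : {t | y t ≠ x t} = Set.univ := Set.eq_univ_of_forall hy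
  exact Set.infinite_univ (hdiff ▸ hy_mem : (Set.univ : Set T).Finite)

lemma SOpen.sigmaFin_subset {A : Set (∀ t, X t)} (hA : SOpen A) {x : ∀ t, X t} (hx : x ∈ A) :
    SigmaFin x ⊆ A := by
  classical
  suffices key : ∀ s : Set T, s.Finite → ∀ y : ∀ t, X t, {t | y t ≠ x t} ⊆ s → y ∈ A from
    fun y hy => key _ hy y le_rfl
  intro s hs
  induction s, hs using Set.Finite.induction_on with
  | empty =>
    intro y hy
    have hyx : y = x := funext fun t => by_contra fun h => hy h
    exact hyx ▸ hx
  | @insert a s _ _ ih =>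
    intro y hy
    -- Reset the coordinate `a` to `x a`; the result is one step from `y`.
    have hz : update y a (x a) ∈ A := ih _ fun t ht => by
      have hta : t ≠ a := by rintro rfl; simp at ht
      change update y a (x a) t ≠ x t at ht
      rw [update_of_ne hta] at ht
      exact (hy ht).resolve_left hta
    exact hA _ hz (mem_sigma1_update y a (x a))

lemma SOpen.eq_univ_of_finite [Finite T] {A : Set (∀ t, X t)} (hA : SOpen A) (hne : A.Nonempty) :
    A = Set.univ := by
  obtain ⟨x, hx⟩ := hne
  refine Set.eq_univ_of_forall fun y => hA.sigmaFin_subset hx ?_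
  exact Set.toFinite _

end

theorem exists_nontrivial_sOpen_iff_infinite_general {T : Type*} {X : T → Type*}
    (hnt : ∀ t, Nontrivial (X t)) :
    (∃ A : Set (∀ t, X t), SOpen A ∧ A ≠ ∅ ∧ A ≠ Set.univ) ↔ Infinite T := by
  constructor
  · rintro ⟨A, hA, hne, hnu⟩
    by_contra hfin
    have : Finite T := not_infinite_iff_finite.mp hfin
    exact hnu (hA.eq_univ_of_finite (Set.nonempty_iff_ne_empty.mpr hne))
  · intro hT
    let x : ∀ t, X t := fun t => Classical.arbitrary (X t)
    exact ⟨SigmaFin x, sOpen_sigmaFin x, (Set.nonempty_of_mem (mem_sigmaFin_self x)).ne_empty,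
      sigmaFin_ne_univ hnt x⟩

/-- There is a nontrivial S-open subset of the product iff the index set is infinite. -/
theorem exists_nontrivial_sOpen_iff_infinite {T : Type*} [Nonempty T] {X : T → Type*}
    (hnt : ∀ t, Nontrivial (X t)) :
    (∃ A : Set (∀ t, X t), SOpen A ∧ A ≠ ∅ ∧ A ≠ Set.univ) ↔ Infinite T :=
  exists_nontrivial_sOpen_iff_infinite_general hnt
end

section
/- Let X be an S-open subset of a product ∏_{t∈T} X_t of topological spaces, let T' be a locally projectively symmetric topology on X, let a = (a_t)_{t∈T} ∈ X, let (Y,d) be a metric space, and let f : (X,T') → Y be continuous at the point a. Then f is strongly separately continuous at a. -/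
open Function Filter Topology

theorem update_mem {T : Type*} [DecidableEq T] {X : T → Type*} {A : Set (∀ t, X t)}
    (hA : SOpen A) {x : ∀ t, X t} (hx : x ∈ A) (t : T) (v : X t) :
    Function.update x t v ∈ A := by
  apply hA x hx
  intro s hs s' hs'
  simp only [Set.mem_setOf_eq] at hs hs'
  have h1 : s = t := by
    by_contra h
    exact hs (Function.update_of_ne h v x)
  have h2 : s' = t := by
    by_contra h
    exact hs' (Function.update_of_ne h v x)
  rw [h1, h2]

/-- The point `x_t^v`: `x` with its `t`-th coordinate replaced by `v`, as an element
of the `S`-open set `A`. -/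
def updPt {T : Type*} [DecidableEq T] {X : T → Type*} {A : Set (∀ t, X t)}
    (hA : SOpen A) (x : ↥A) (t : T) (v : X t) : ↥A :=
  ⟨Function.update x.1 t v, update_mem hA x.2 t v⟩

/-- `f : (A, T') → Y` is strongly separately continuous at `a` (w.r.t. every variable):
for each `t`, `lim_{x → a} dist (f x) (f (x_t^a)) = 0`, the limit taken in `T'`. -/
def StrSepContAt {T : Type*} [DecidableEq T] {X : T → Type*} {A : Set (∀ t, X t)}
    (hA : SOpen A) (T' : TopologicalSpace ↥A) {Y : Type*} [MetricSpace Y]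
    (f : ↥A → Y) (a : ↥A) : Prop :=
  ∀ t : T, Filter.Tendsto (fun x : ↥A => dist (f x) (f (updPt hA x t (a.1 t))))
    (@nhds _ T' a) (nhds 0)

/-- `B ⊆ A` is projectively symmetric with respect to `a`: `x_t^a ∈ B` for all `x ∈ B`, `t`. -/
def ProjSym {T : Type*} [DecidableEq T] {X : T → Type*} {A : Set (∀ t, X t)}
    (hA : SOpen A) (B : Set ↥A) (a : ↥A) : Prop :=
  ∀ x ∈ B, ∀ t : T, updPt hA x t (a.1 t) ∈ B

/-- A topology `T'` on `A` is locally projectively symmetric: every point has a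
neighborhood base of sets projectively symmetric with respect to it. -/
def LocProjSym {T : Type*} [DecidableEq T] {X : T → Type*} {A : Set (∀ t, X t)}
    (hA : SOpen A) (T' : TopologicalSpace ↥A) : Prop :=
  ∀ x : ↥A, ∀ U ∈ @nhds _ T' x, ∃ V ∈ @nhds _ T' x, V ⊆ U ∧ ProjSym hA V x

theorem tendsto_updPt_nhds_of_locProjSym {T : Type*} [DecidableEq T] {X : T → Type*}
    {A : Set (∀ t, X t)} (hA : SOpen A) [τ : TopologicalSpace ↥A] (hsym : LocProjSym hA τ)
    (a : ↥A) (t : T) : Tendsto (fun x : ↥A => updPt hA x t (a.1 t)) (𝓝 a) (𝓝 a) := by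
  intro U hU
  obtain ⟨V, hV, hVU, hVsym⟩ := hsym a U hU
  exact mem_map.mpr (mem_of_superset hV fun x hx => hVU (hVsym x hx t))

theorem continuousAt_strSepContAt_general {T : Type*} [DecidableEq T] {X : T → Type*}
    {A : Set (∀ t, X t)} (hA : SOpen A)
    (T' : TopologicalSpace ↥A) (hsym : LocProjSym hA T') {Y : Type*} [MetricSpace Y]
    (f : ↥A → Y) (a : ↥A) (hf : @ContinuousAt _ _ T' _ f a) :
    StrSepContAt hA T' f a := by
  let := T'
  intro t
  have hf_upd : Tendsto (fun x => f (updPt hA x t (a.1 t))) (𝓝 a) (𝓝 (f a)) :=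
    hf.tendsto.comp (tendsto_updPt_nhds_of_locProjSym hA hsym a t)
  simpa only [dist_self] using hf.tendsto.dist hf_upd

/-- If a topology `T'` on an S-open set `A` is locally projectively symmetric and
`f : (A, T') → Y` is continuous at `a`, then `f` is strongly separately continuous at `a`. -/
theorem continuousAt_strSepContAt {T : Type*} [DecidableEq T] {X : T → Type*}
    [∀ t, TopologicalSpace (X t)] {A : Set (∀ t, X t)} (hA : SOpen A)
    (T' : TopologicalSpace ↥A) (hsym : LocProjSym hA T') {Y : Type*} [MetricSpace Y]
    (f : ↥A → Y) (a : ↥A) (hf : @ContinuousAt _ _ T' _ f a) :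
    StrSepContAt hA T' f a :=
  continuousAt_strSepContAt_general hA T' hsym f a hf
end
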